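/- arXiv:1501.00430 — 8 statements merged into one kernel-verified Lean document; each statement's English description precedes it below -/
import Mathlib

section
/- The f-vector of the d-dimensional cube, where f_k = 2^(d-k) * C(d,k) is the number of k-dimensional faces, is strictly increasing up to index ⌊d/3⌋ and strictly decreasing from index ⌊(d+1)/3⌋ on; that is, f_0 < f_1 < ... < f_{⌊d/3⌋} and f_{⌊(d+1)/3⌋} > ... > f_{d-1}. -/
/-! Consecutive face numbers of the `d`-cube satisfy `f_{k+1} / f_k = (d - k) / (2 (k + 1))`,
so the f-vector rises while `d - k > 2 (k + 1)`, i.e. `3k + 2 < d`, and falls once `d - k < 2 (k + 1)`. -/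

def cubeFaceCount (d k : ℕ) : ℕ := 2 ^ (d - k) * d.choose k

lemma cubeFaceCount_pos {d k : ℕ} (hk : k ≤ d) : 0 < cubeFaceCount d k :=
  Nat.mul_pos (Nat.two_pow_pos _) (Nat.choose_pos hk)

lemma cubeFaceCount_succ_mul (d k : ℕ) :
    cubeFaceCount d (k + 1) * (2 * (k + 1)) = cubeFaceCount d k * (d - k) := by
  unfold cubeFaceCount
  rcases lt_or_ge k d with hk | hk
  · have hpow : 2 ^ (d - k) = 2 ^ (d - (k + 1)) * 2 := by
      rw [← pow_succ]; congr 1; omega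
    rw [hpow]
    linear_combination 2 ^ (d - (k + 1)) * 2 * Nat.choose_succ_right_eq d k
  · rw [Nat.choose_eq_zero_of_lt (by omega), Nat.sub_eq_zero_of_le hk]
    simp

lemma cubeFaceCount_lt_succ {d k : ℕ} (h : 2 * (k + 1) < d - k) :
    cubeFaceCount d k < cubeFaceCount d (k + 1) := by
  refine Nat.lt_of_mul_lt_mul_right (a := 2 * (k + 1)) ?_
  rw [cubeFaceCount_succ_mul]
  exact Nat.mul_lt_mul_of_pos_left h (cubeFaceCount_pos (by omega))

lemma cubeFaceCount_succ_lt {d k : ℕ} (hk : k ≤ d) (h : d - k < 2 * (k + 1)) :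
    cubeFaceCount d (k + 1) < cubeFaceCount d k := by
  refine Nat.lt_of_mul_lt_mul_right (a := 2 * (k + 1)) ?_
  rw [cubeFaceCount_succ_mul]
  exact Nat.mul_lt_mul_of_pos_left h (cubeFaceCount_pos hk)

theorem cube_fvector_strict_mono_general (d : ℕ) (f : ℕ → ℕ)
    (hf : ∀ k, f k = 2 ^ (d - k) * Nat.choose d k) :
    (∀ k, k < d / 3 → f k < f (k + 1)) ∧
    (∀ k, (d + 1) / 3 ≤ k → k + 1 ≤ d - 1 → f (k + 1) < f k) := by
  obtain rfl : f = cubeFaceCount d := funext hf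
  exact ⟨fun k hk => cubeFaceCount_lt_succ (by omega),
    fun k hk hkd => cubeFaceCount_succ_lt (by omega) (by omega)⟩

/-- The f-vector of the d-cube, f_k = 2^(d-k) * C(d,k), is strictly increasing
up to index ⌊d/3⌋ and strictly decreasing from index ⌊(d+1)/3⌋ on. -/
theorem cube_fvector_strict_mono (d : ℕ) (hd : 0 < d) (f : ℕ → ℕ)
    (hf : ∀ k, f k = 2 ^ (d - k) * Nat.choose d k) :
    (∀ k, k < d / 3 → f k < f (k + 1)) ∧
    (∀ k, (d + 1) / 3 ≤ k → k + 1 ≤ d - 1 → f (k + 1) < f k) :=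
  cube_fvector_strict_mono_general d f hf
end

section
/- The f-vector of the d-cube (f_k = 2^(d-k) * C(d,k)) is unimodal with peak at ⌊d/3⌋: it is non-decreasing on indices 0,...,⌊d/3⌋ and non-increasing on indices ⌊d/3⌋,...,d-1. -/
/-! The ratio of consecutive entries is `f (k+1) / f k = (d - k) / (2 (k + 1))`, which is at least
one exactly when `3 k + 2 ≤ d`, i.e. when `k + 1 ≤ ⌊d / 3⌋`. -/

namespace Nat

theorem two_mul_choose_le_choose_succ {d k : ℕ} (h : 3 * k + 2 ≤ d) :
    2 * d.choose k ≤ d.choose (k + 1) := by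
  refine Nat.le_of_mul_le_mul_right ?_ k.succ_pos
  calc 2 * d.choose k * (k + 1) = d.choose k * (2 * (k + 1)) := by ring
    _ ≤ d.choose k * (d - k) := Nat.mul_le_mul_left _ (by omega)
    _ = d.choose (k + 1) * (k + 1) := (choose_succ_right_eq d k).symm

theorem choose_succ_le_two_mul_choose {d k : ℕ} (h : d ≤ 3 * k + 2) :
    d.choose (k + 1) ≤ 2 * d.choose k := by
  refine Nat.le_of_mul_le_mul_right ?_ k.succ_pos
  calc d.choose (k + 1) * (k + 1) = d.choose k * (d - k) := choose_succ_right_eq d k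
    _ ≤ d.choose k * (2 * (k + 1)) := Nat.mul_le_mul_left _ (by omega)
    _ = 2 * d.choose k * (k + 1) := by ring

theorem two_pow_mul_choose_le_succ {d k : ℕ} (h : 3 * k + 2 ≤ d) :
    2 ^ (d - k) * d.choose k ≤ 2 ^ (d - (k + 1)) * d.choose (k + 1) := by
  rw [show d - k = d - (k + 1) + 1 by omega, pow_succ, mul_assoc]
  exact Nat.mul_le_mul_left _ (two_mul_choose_le_choose_succ h)

theorem two_pow_mul_choose_succ_le {d k : ℕ} (h : d ≤ 3 * k + 2) :
    2 ^ (d - (k + 1)) * d.choose (k + 1) ≤ 2 ^ (d - k) * d.choose k := by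
  rcases lt_or_ge k d with hk | hk
  · rw [show d - k = d - (k + 1) + 1 by omega, pow_succ, mul_assoc]
    exact Nat.mul_le_mul_left _ (choose_succ_le_two_mul_choose h)
  · simp [choose_eq_zero_of_lt (lt_succ_of_le hk)]

end Nat

theorem cube_fvector_unimodal_general (d : ℕ) (f : ℕ → ℕ)
    (hf : ∀ k, f k = 2 ^ (d - k) * Nat.choose d k) :
    (∀ k, k + 1 ≤ d / 3 → f k ≤ f (k + 1)) ∧
    (∀ k, d / 3 ≤ k → k + 1 ≤ d - 1 → f (k + 1) ≤ f k) := by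
  simp only [hf]
  exact ⟨fun k hk => Nat.two_pow_mul_choose_le_succ (by omega),
    fun k hk _ => Nat.two_pow_mul_choose_succ_le (by omega)⟩

/-- The f-vector of the d-cube, f_k = 2^(d-k) * C(d,k), is unimodal with peak at ⌊d/3⌋:
non-decreasing on 0,...,⌊d/3⌋ and non-increasing on ⌊d/3⌋,...,d-1. -/
theorem cube_fvector_unimodal (d : ℕ) (hd : 0 < d) (f : ℕ → ℕ)
    (hf : ∀ k, f k = 2 ^ (d - k) * Nat.choose d k) :
    (∀ k, k + 1 ≤ d / 3 → f k ≤ f (k + 1)) ∧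
    (∀ k, d / 3 ≤ k → k + 1 ≤ d - 1 → f (k + 1) ≤ f k) :=
  cube_fvector_unimodal_general d f hf
end

section
/- Let d be a positive integer and H(i,j) = 2^(-j) * C(d-i-1, d-j-1) for 0 ≤ i,j ≤ d-1. Then for each fixed i, the i-th row of H satisfies: H(i,i) < H(i,i+1) < ... < H(i, ⌊(d+2i)/3⌋ - 1) ≤ H(i, ⌊(d+2i)/3⌋) > H(i, ⌊(d+2i)/3⌋ + 1) > ... > H(i, d-1). -/
/-!
Consecutive entries of a row have ratio `H(i,j+1) / H(i,j) = (d-j-1) / (2(j+1-i))`, by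
`C(n,m+1) (m+1) = C(n,m) (n-m)`. So the row rises while `2(j+1-i) < d-j-1`, i.e. while
`3(j+1) < d+2i`, and falls strictly once `3(j+1) > d+2i`; the turning point is `⌊(d+2i)/3⌋`.
-/

namespace Nat

theorem mul_choose_succ_le_choose_iff (k : ℕ) {n m : ℕ} (h : m ≤ n) :
    k * n.choose (m + 1) ≤ n.choose m ↔ k * (n - m) ≤ m + 1 :=
  calc k * n.choose (m + 1) ≤ n.choose m
      ↔ k * n.choose (m + 1) * (m + 1) ≤ n.choose m * (m + 1) :=
        (Nat.mul_le_mul_right_iff m.succ_pos).symm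
    _ ↔ n.choose m * (k * (n - m)) ≤ n.choose m * (m + 1) := by
        rw [mul_assoc, choose_succ_right_eq, mul_left_comm]
    _ ↔ k * (n - m) ≤ m + 1 := Nat.mul_le_mul_left_iff (choose_pos h)

theorem mul_choose_succ_lt_choose_iff (k : ℕ) {n m : ℕ} (h : m ≤ n) :
    k * n.choose (m + 1) < n.choose m ↔ k * (n - m) < m + 1 :=
  calc k * n.choose (m + 1) < n.choose m
      ↔ k * n.choose (m + 1) * (m + 1) < n.choose m * (m + 1) :=
        (Nat.mul_lt_mul_right m.succ_pos).symm
    _ ↔ n.choose m * (k * (n - m)) < n.choose m * (m + 1) := by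
        rw [mul_assoc, choose_succ_right_eq, mul_left_comm]
    _ ↔ k * (n - m) < m + 1 := Nat.mul_lt_mul_left (choose_pos h)

end Nat

section

variable {K : Type*} [Field K] [LinearOrder K] [IsStrictOrderedRing K]

theorem two_zpow_neg_mul_eq_succ (j : ℕ) (a : K) :
    (2 : K) ^ (-(j : ℤ)) * a = 2 ^ (-((j + 1 : ℕ) : ℤ)) * (2 * a) := by
  rw [zpow_neg, zpow_neg, zpow_natCast, zpow_natCast, pow_succ, mul_inv, mul_assoc,
    inv_mul_cancel_left₀ two_ne_zero]

theorem two_zpow_neg_mul_le_succ_iff (j : ℕ) (a b : K) :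
    (2 : K) ^ (-(j : ℤ)) * a ≤ 2 ^ (-((j + 1 : ℕ) : ℤ)) * b ↔ 2 * a ≤ b := by
  rw [two_zpow_neg_mul_eq_succ, mul_le_mul_iff_right₀ (zpow_pos two_pos _)]

theorem two_zpow_neg_mul_lt_succ_iff (j : ℕ) (a b : K) :
    (2 : K) ^ (-(j : ℤ)) * a < 2 ^ (-((j + 1 : ℕ) : ℤ)) * b ↔ 2 * a < b := by
  rw [two_zpow_neg_mul_eq_succ, mul_lt_mul_iff_right₀ (zpow_pos two_pos _)]

end

section

variable {d : ℕ} {H : ℕ → ℕ → ℚ}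
  (hH : ∀ i j, H i j = (2 : ℚ) ^ (-(j : ℤ)) * ((d - i - 1).choose (d - j - 1) : ℚ))
include hH

theorem H_le_H_succ_iff {i j : ℕ} (hij : i ≤ j) (hjd : j + 2 ≤ d) :
    H i j ≤ H i (j + 1) ↔ 2 * (j + 1 - i) ≤ d - j - 1 := by
  have hm : d - j - 1 = d - j - 2 + 1 := by omega
  have hm' : d - (j + 1) - 1 = d - j - 2 := by omega
  rw [hH, hH, hm, hm', two_zpow_neg_mul_le_succ_iff]
  exact_mod_cast (Nat.mul_choose_succ_le_choose_iff 2 (by omega)).trans (by omega)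

theorem H_lt_H_succ_iff {i j : ℕ} (hij : i ≤ j) (hjd : j + 2 ≤ d) :
    H i j < H i (j + 1) ↔ 2 * (j + 1 - i) < d - j - 1 := by
  have hm : d - j - 1 = d - j - 2 + 1 := by omega
  have hm' : d - (j + 1) - 1 = d - j - 2 := by omega
  rw [hH, hH, hm, hm', two_zpow_neg_mul_lt_succ_iff]
  exact_mod_cast (Nat.mul_choose_succ_lt_choose_iff 2 (by omega)).trans (by omega)

end

theorem H_row_unimodal_general (d : ℕ) (i : ℕ) (H : ℕ → ℕ → ℚ)
    (hH : ∀ i j, H i j = (2 : ℚ) ^ (-(j : ℤ)) * ((d - i - 1).choose (d - j - 1) : ℚ)) :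
    (∀ j, i ≤ j → j + 2 ≤ (d + 2 * i) / 3 → H i j < H i (j + 1)) ∧
    (∀ j, i ≤ j → j + 1 = (d + 2 * i) / 3 → H i j ≤ H i (j + 1)) ∧
    (∀ j, (d + 2 * i) / 3 ≤ j → j + 2 ≤ d → H i (j + 1) < H i j) := by
  refine ⟨fun j hij hj ↦ ?_, fun j hij hj ↦ ?_, fun j hj hjd ↦ ?_⟩
  · exact (H_lt_H_succ_iff hH hij (by omega)).2 (by omega)
  · exact (H_le_H_succ_iff hH hij (by omega)).2 (by omega)
  · have hij : i ≤ j := by omega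
    exact lt_of_not_ge fun hle ↦ by have := (H_le_H_succ_iff hH hij hjd).1 hle; omega

/-- The i-th row of H(i,j) = 2^(-j) * C(d-i-1, d-j-1) satisfies
H(i,i) < H(i,i+1) < ... < H(i,⌊(d+2i)/3⌋-1) ≤ H(i,⌊(d+2i)/3⌋) > ... > H(i,d-1). -/
theorem H_row_unimodal (d : ℕ) (hd : 0 < d) (i : ℕ) (hi : i ≤ d - 1) (H : ℕ → ℕ → ℚ)
    (hH : ∀ i j, H i j = (2 : ℚ) ^ (-(j : ℤ)) * ((d - i - 1).choose (d - j - 1) : ℚ)) :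
    (∀ j, i ≤ j → j + 2 ≤ (d + 2 * i) / 3 → H i j < H i (j + 1)) ∧
    (∀ j, i ≤ j → j + 1 = (d + 2 * i) / 3 → H i j ≤ H i (j + 1)) ∧
    (∀ j, (d + 2 * i) / 3 ≤ j → j + 2 ≤ d → H i (j + 1) < H i j) :=
  H_row_unimodal_general d i H hH
end

section
/- Let d be a positive integer, 0 ≤ i ≤ k ≤ d-1, with H(i,j) = 2^(-j)*C(d-i-1,d-j-1) and a_j = H(i,j) + H(k,j). Then the vector (a_0,...,a_{d-1}) is unimodal, peaking at ⌊(d+2i)/3⌋. -/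
/-!
Put `m = d - i - 1 ≥ n = d - k - 1` and `t = d - j - 2`. Then `a j ≤ a (j + 1)` is
`2 (C(m, t+1) + C(n, t+1)) ≤ C(m, t) + C(n, t)`, and each row contributes through
`(t + 1) (2 C(x, t+1) - C(x, t)) = C(x, t) (2x - 3t - 1) =: g_t(x)`.
Before the peak both `g_t(m)` and `g_t(n)` are `≤ 0`. After it `g_t(m) > 0` while `g_t(n)` may be
negative; but `g_t` decreases on `2x ≤ 3t` and increases on `2x ≥ 3t + 1`, so it suffices to compare
`x₀ = ⌊3t/2⌋` with `3t + 1 - x₀`, where the linear factors are opposite and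
`C(x₀, t) ≤ C(3t + 1 - x₀, t)`.
-/

def binomGap (t x : ℕ) : ℤ := x.choose t * (2 * x - 3 * t - 1)

lemma succ_mul_two_mul_choose_succ_sub_choose (x t : ℕ) :
    ((t : ℤ) + 1) * (2 * x.choose (t + 1) - x.choose t) = binomGap t x := by
  unfold binomGap
  rcases le_or_gt t x with htx | hxt
  · have h : ((x.choose (t + 1) * (t + 1) : ℕ) : ℤ) = ((x.choose t * (x - t) : ℕ) : ℤ) :=
      congrArg _ (Nat.choose_succ_right_eq x t)
    push_cast [htx] at h
    linear_combination 2 * h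
  · simp [Nat.choose_eq_zero_of_lt hxt, Nat.choose_eq_zero_of_lt (hxt.trans (Nat.lt_succ_self t))]

lemma binomGap_nonneg {t x : ℕ} (h : 3 * t + 1 ≤ 2 * x) : 0 ≤ binomGap t x :=
  mul_nonneg (Nat.cast_nonneg _) (by omega)

lemma binomGap_nonpos {t x : ℕ} (h : 2 * x ≤ 3 * t + 1) : binomGap t x ≤ 0 :=
  mul_nonpos_of_nonneg_of_nonpos (Nat.cast_nonneg _) (by omega)

lemma binomGap_monotoneOn (t : ℕ) : MonotoneOn (binomGap t) {x | 3 * t + 1 ≤ 2 * x} := by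
  refine monotoneOn_of_le_succ ⟨fun _ hx _ _ _ hz ↦ ?_⟩ fun x _ hx _ ↦ ?_
  · simp only [Set.mem_ofPred_eq, Set.mem_Icc] at *
    omega
  · simp only [Set.mem_ofPred_eq, Order.succ_eq_add_one] at *
    exact mul_le_mul (by exact_mod_cast Nat.choose_le_succ x t) (by push_cast; omega)
      (by omega) (Nat.cast_nonneg _)

lemma binomGap_antitoneOn (t : ℕ) : AntitoneOn (binomGap t) {x | 2 * x ≤ 3 * t} := by
  refine antitoneOn_of_succ_le ⟨fun _ hx _ _ _ hz ↦ ?_⟩ fun x _ _ hx ↦ ?_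
  · simp only [Set.mem_ofPred_eq, Set.mem_Icc] at *
    omega
  · simp only [Set.mem_ofPred_eq, Order.succ_eq_add_one] at hx ⊢
    rcases lt_or_ge x t with hxt | htx
    · calc binomGap t (x + 1) ≤ 0 := binomGap_nonpos (by omega)
        _ = binomGap t x := by simp [binomGap, Nat.choose_eq_zero_of_lt hxt]
    · unfold binomGap
      have h : ((x.choose t * (x + 1) : ℕ) : ℤ) = (((x + 1).choose t * (x + 1 - t) : ℕ) : ℤ) :=
        congrArg _ (Nat.choose_mul_succ_eq x t)
      push_cast [htx.trans (Nat.le_succ x)] at h ⊢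
      have hslack : (0 : ℤ) ≤ x.choose t * ((t + 1) * (3 * t - 2 * x - 2)) :=
        mul_nonneg (Nat.cast_nonneg _) (mul_nonneg (by positivity) (by omega))
      refine le_of_mul_le_mul_left ?_ (by omega : (0 : ℤ) < x + 1 - t)
      nlinarith

lemma neg_binomGap_le_binomGap_sub {t x : ℕ} (h : 2 * x ≤ 3 * t + 1) :
    -binomGap t x ≤ binomGap t (3 * t + 1 - x) := by
  have hfac : (2 * (3 * t + 1 - x : ℕ) - 3 * t - 1 : ℤ) = -(2 * x - 3 * t - 1) := by omega
  rw [binomGap, binomGap, hfac, neg_mul_eq_mul_neg]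
  exact mul_le_mul_of_nonneg_right (by exact_mod_cast Nat.choose_le_choose t (by omega))
    (by omega)

lemma binomGap_add_nonneg {t m n : ℕ} (hnm : n ≤ m) (hm : 3 * t + 2 ≤ 2 * m) :
    0 ≤ binomGap t m + binomGap t n := by
  rcases le_or_gt (3 * t + 1) (2 * n) with hn | hn
  · exact add_nonneg (binomGap_nonneg (by omega)) (binomGap_nonneg hn)
  set n₀ := 3 * t / 2
  have hn₀ : binomGap t n₀ ≤ binomGap t n :=
    binomGap_antitoneOn t (show 2 * n ≤ 3 * t by omega) (show 2 * n₀ ≤ 3 * t by omega)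
      (by omega)
  have hm₀ : binomGap t (3 * t + 1 - n₀) ≤ binomGap t m :=
    binomGap_monotoneOn t (show 3 * t + 1 ≤ 2 * (3 * t + 1 - n₀) by omega)
      (show 3 * t + 1 ≤ 2 * m by omega) (by omega)
  linarith [neg_binomGap_le_binomGap_sub (t := t) (x := n₀) (by omega)]

lemma two_mul_choose_succ_le_choose {t x : ℕ} (h : 2 * x ≤ 3 * t + 1) :
    2 * x.choose (t + 1) ≤ x.choose t := by
  have hgap := succ_mul_two_mul_choose_succ_sub_choose x t ▸ binomGap_nonpos h
  have := nonpos_of_mul_nonpos_right hgap (by positivity)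
  omega

lemma choose_add_choose_le_two_mul {t m n : ℕ} (hnm : n ≤ m) (hm : 3 * t + 2 ≤ 2 * m) :
    m.choose t + n.choose t ≤ 2 * (m.choose (t + 1) + n.choose (t + 1)) := by
  have hgap := binomGap_add_nonneg hnm hm
  rw [← succ_mul_two_mul_choose_succ_sub_choose, ← succ_mul_two_mul_choose_succ_sub_choose,
    ← mul_add] at hgap
  have := nonneg_of_mul_nonneg_right hgap (by positivity)
  omega

theorem H_two_rows_sum_unimodal_general (d : ℕ) (i k : ℕ) (hik : i ≤ k) (hk : k ≤ d - 1)
    (H : ℕ → ℕ → ℚ)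
    (hH : ∀ i j, H i j = (2 : ℚ) ^ (-(j : ℤ)) * ((d - i - 1).choose (d - j - 1) : ℚ))
    (a : ℕ → ℚ) (ha : ∀ j, a j = H i j + H k j) :
    (∀ j, j + 1 ≤ (d + 2 * i) / 3 → a j ≤ a (j + 1)) ∧
    (∀ j, (d + 2 * i) / 3 ≤ j → j + 1 ≤ d - 1 → a (j + 1) ≤ a j) := by
  let S (t : ℕ) : ℕ := (d - i - 1).choose t + (d - k - 1).choose t
  have hconsec : ∀ j, j + 2 ≤ d →
      a j = 2 ^ (-(j : ℤ)) * (S (d - j - 2 + 1) : ℚ) ∧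
      a (j + 1) = 2 ^ (-(j : ℤ)) * ((S (d - j - 2) : ℚ) / 2) := by
    intro j hj
    rw [ha, ha, hH, hH, hH, hH, show d - j - 2 + 1 = d - j - 1 by omega,
      show d - (j + 1) - 1 = d - j - 2 by omega]
    push_cast [S]
    rw [neg_add, zpow_add₀ two_ne_zero, zpow_neg_one]
    constructor <;> ring
  constructor
  · intro j hj
    obtain ⟨hj₀, hj₁⟩ := hconsec j (by omega)
    rw [hj₀, hj₁]
    gcongr
    rw [le_div_iff₀ two_pos]
    have hm := two_mul_choose_succ_le_choose (x := d - i - 1) (t := d - j - 2) (by omega)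
    have hn := two_mul_choose_succ_le_choose (x := d - k - 1) (t := d - j - 2) (by omega)
    exact_mod_cast (show S (d - j - 2 + 1) * 2 ≤ S (d - j - 2) by simp only [S]; omega)
  · intro j hj hjd
    obtain ⟨hj₀, hj₁⟩ := hconsec j (by omega)
    rw [hj₀, hj₁]
    gcongr
    rw [div_le_iff₀ two_pos]
    have := choose_add_choose_le_two_mul (t := d - j - 2)
      (by omega : d - k - 1 ≤ d - i - 1) (by omega)
    exact_mod_cast (show S (d - j - 2) ≤ S (d - j - 2 + 1) * 2 by simp only [S]; omega)

/-- For 0 ≤ i ≤ k ≤ d-1 and a_j = H(i,j) + H(k,j), the vector (a_0,...,a_{d-1})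
is unimodal, peaking at ⌊(d+2i)/3⌋. -/
theorem H_two_rows_sum_unimodal (d : ℕ) (hd : 0 < d) (i k : ℕ) (hik : i ≤ k) (hk : k ≤ d - 1)
    (H : ℕ → ℕ → ℚ)
    (hH : ∀ i j, H i j = (2 : ℚ) ^ (-(j : ℤ)) * ((d - i - 1).choose (d - j - 1) : ℚ))
    (a : ℕ → ℚ) (ha : ∀ j, a j = H i j + H k j) :
    (∀ j, j + 1 ≤ (d + 2 * i) / 3 → a j ≤ a (j + 1)) ∧
    (∀ j, (d + 2 * i) / 3 ≤ j → j + 1 ≤ d - 1 → a (j + 1) ≤ a j) :=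
  H_two_rows_sum_unimodal_general d i k hik hk H hH a ha
end

section
/- Let P be a cubical d-polytope whose short cubical h-vector h^(sc) = (h_0,...,h_{d-1}) has all entries positive integers, is symmetric (h_i = h_{d-1-i}), and whose f-vector satisfies f = h^(sc) · H with H(i,j) = 2^(-j)*C(d-i-1,d-j-1). Then f_0 < f_1 < ... < f_{⌊d/3⌋-1} ≤ f_{⌊d/3⌋} and f_{⌊2d/3⌋} > f_{⌊2d/3⌋+1} > ... > f_{d-1}. -/
/-!
Put `k = d - j - 2` and `nᵢ = d - i - 1`. Then `2^(j+1) (f_j - f_{j+1}) = ∑ᵢ hᵢ (2 C(nᵢ, k+1) - C(nᵢ, k))`,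
and `(k+1) (2 C(n, k+1) - C(n, k)) = (2n - 3k - 1) C(n, k)`. When `3j + 3 ≤ d` every coefficient
`2n - 3k - 1` with `n < d` is nonpositive and the term `n = k` is negative, so `f` increases. When
`2d ≤ 3j + 2` the coefficients have mixed signs, but the symmetry of `h` pairs `n` with `m = d - 1 - n`,
and each pair contributes positively since the larger coefficient multiplies the larger binomial
`C(m, k) ≥ C(n, k)`.
-/

open Finset

section Choose

variable {R : Type*}

theorem succ_mul_choose_succ_eq_sub_mul_choose [CommRing R] (n k : ℕ) :
    ((k + 1) * n.choose (k + 1) : R) = (n - k) * n.choose k := by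
  rcases le_or_gt k n with hkn | hnk
  · have := congrArg ((↑) : ℕ → R) (Nat.choose_succ_right_eq n k)
    push_cast [hkn] at this
    linear_combination this
  · simp [Nat.choose_eq_zero_of_lt hnk, Nat.choose_eq_zero_of_lt (hnk.trans k.lt_succ_self)]

theorem succ_mul_two_mul_choose_succ_sub_choose_s9 [CommRing R] (n k : ℕ) :
    ((k + 1) * (2 * n.choose (k + 1) - n.choose k) : R) = (2 * n - 3 * k - 1) * n.choose k := by
  linear_combination 2 * succ_mul_choose_succ_eq_sub_mul_choose (R := R) n k

variable [CommRing R] [LinearOrder R] [IsStrictOrderedRing R]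

theorem two_mul_choose_succ_le_choose_s9 {n k : ℕ} (h : 2 * n ≤ 3 * k + 1) :
    (2 * n.choose (k + 1) : R) ≤ n.choose k := by
  have hcoeff : (2 * n - 3 * k - 1 : R) ≤ 0 := by
    have : (2 * n : R) ≤ 3 * k + 1 := by exact_mod_cast h
    linarith
  have hprod : (k + 1 : R) * (2 * n.choose (k + 1) - n.choose k) ≤ 0 := by
    rw [succ_mul_two_mul_choose_succ_sub_choose_s9]
    exact mul_nonpos_of_nonpos_of_nonneg hcoeff (Nat.cast_nonneg _)
  exact sub_nonpos.1 (nonpos_of_mul_nonpos_right hprod (by positivity))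

theorem two_mul_choose_succ_sub_choose_add_pos {n m k : ℕ} (hnm : n ≤ m)
    (hk : 3 * k + 3 ≤ n + m) :
    0 < (2 * n.choose (k + 1) - n.choose k : R) + (2 * m.choose (k + 1) - m.choose k) := by
  have hx : (0 : R) ≤ n.choose k := Nat.cast_nonneg _
  have hxy : (n.choose k : R) ≤ m.choose k := by exact_mod_cast Nat.choose_le_choose k hnm
  have hy : (0 : R) < m.choose k := by exact_mod_cast Nat.choose_pos (by omega)
  have hm : (3 * k + 3 : R) ≤ 2 * m := by exact_mod_cast (by omega : 3 * k + 3 ≤ 2 * m)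
  have hsum : (3 * k + 3 : R) ≤ n + m := by exact_mod_cast hk
  refine pos_of_mul_pos_right (a := (k + 1 : R)) ?_ (by positivity)
  rw [mul_add, succ_mul_two_mul_choose_succ_sub_choose_s9, succ_mul_two_mul_choose_succ_sub_choose_s9]
  nlinarith [mul_nonneg (by linarith : (0 : R) ≤ 2 * n + 2 * m - 6 * k - 6) hx,
    mul_nonneg (by linarith : (0 : R) ≤ 2 * m - 3 * k - 3) (sub_nonneg.2 hxy)]

end Choose

theorem sum_mul_reflect_pos {R : Type*} [CommRing R] [LinearOrder R] [IsStrictOrderedRing R]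
    {d : ℕ} (hd : 0 < d) {a : ℕ → ℕ} (hpos : ∀ i, i ≤ d - 1 → 0 < a i)
    (hsym : ∀ i, i ≤ d - 1 → a i = a (d - i - 1)) {B : ℕ → R}
    (hB : ∀ n m, n + m + 1 = d → 0 < B n + B m) :
    0 < ∑ i ∈ range d, (a i : R) * B (d - i - 1) := by
  have hreflect : ∑ i ∈ range d, (a i : R) * B (d - i - 1) = ∑ i ∈ range d, (a i : R) * B i := by
    refine (sum_range_reflect _ d).symm.trans (sum_congr rfl fun i hi => ?_)
    have hi := mem_range.1 hi
    rw [hsym i (by omega), show d - (d - 1 - i) - 1 = i by omega, show d - 1 - i = d - i - 1 by omega]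
  have htwo : 2 * ∑ i ∈ range d, (a i : R) * B (d - i - 1) =
      ∑ i ∈ range d, (a i : R) * (B (d - i - 1) + B i) := by
    rw [two_mul]
    nth_rewrite 2 [hreflect]
    simp only [mul_add, sum_add_distrib]
  have hsum : 0 < ∑ i ∈ range d, (a i : R) * (B (d - i - 1) + B i) := by
    refine sum_pos (fun i hi => ?_) (nonempty_range_iff.2 hd.ne')
    have hi := mem_range.1 hi
    exact mul_pos (by exact_mod_cast hpos i (by omega)) (hB _ _ (by omega))
  linarith

def cubicalFVector (d : ℕ) (h : ℕ → ℕ) (j : ℕ) : ℚ :=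
  ∑ i ∈ range d, (h i : ℚ) * ((2 : ℚ) ^ (-(j : ℤ)) * ((d - i - 1).choose (d - j - 1) : ℚ))

section CubicalFVector

variable {d : ℕ} {h : ℕ → ℕ}

theorem cubicalFVector_sub_succ {j k : ℕ} (hjk : j + k + 2 = d) :
    cubicalFVector d h j - cubicalFVector d h (j + 1) =
      2 ^ (-(j + 1 : ℤ)) * ∑ i ∈ range d, (h i : ℚ) *
        (2 * (d - i - 1).choose (k + 1) - (d - i - 1).choose k) := by
  have hpow : (2 : ℚ) ^ (-(j : ℤ)) = 2 * 2 ^ (-(j + 1 : ℤ)) := by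
    rw [neg_add, zpow_add₀ two_ne_zero, zpow_neg_one]
    ring
  simp only [cubicalFVector, mul_sum, ← sum_sub_distrib, show d - j - 1 = k + 1 by omega,
    show d - (j + 1) - 1 = k by omega, hpow]
  refine sum_congr rfl fun i _ => ?_
  push_cast
  ring

theorem cubicalFVector_lt_succ (hpos : ∀ i, i ≤ d - 1 → 0 < h i) {j : ℕ} (hj : 3 * j + 3 ≤ d) :
    cubicalFVector d h j < cubicalFVector d h (j + 1) := by
  obtain ⟨k, hk⟩ : ∃ k, j + k + 2 = d := ⟨d - j - 2, by omega⟩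
  rw [← sub_neg, cubicalFVector_sub_succ hk]
  refine mul_neg_of_pos_of_neg (by positivity) (sum_neg' (fun i _ => ?_) ⟨j + 1, ?_, ?_⟩)
  · exact mul_nonpos_of_nonneg_of_nonpos (Nat.cast_nonneg _)
      (sub_nonpos.2 (two_mul_choose_succ_le_choose_s9 (by omega)))
  · exact mem_range.2 (by omega)
  · have hhj : (0 : ℚ) < h (j + 1) := by exact_mod_cast hpos (j + 1) (by omega)
    simp [show d - (j + 1) - 1 = k by omega, hhj]

theorem cubicalFVector_succ_lt (hpos : ∀ i, i ≤ d - 1 → 0 < h i)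
    (hsym : ∀ i, i ≤ d - 1 → h i = h (d - i - 1)) {j : ℕ} (hj : 2 * d ≤ 3 * j + 2)
    (hjd : j + 2 ≤ d) :
    cubicalFVector d h (j + 1) < cubicalFVector d h j := by
  obtain ⟨k, hk⟩ : ∃ k, j + k + 2 = d := ⟨d - j - 2, by omega⟩
  rw [← sub_pos, cubicalFVector_sub_succ hk]
  refine mul_pos (by positivity) (sum_mul_reflect_pos (by omega) hpos hsym
    (B := fun n => 2 * (n.choose (k + 1) : ℚ) - n.choose k) fun n m hnm => ?_)
  rcases le_total n m with hle | hle
  · exact two_mul_choose_succ_sub_choose_add_pos hle (by omega)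
  · rw [add_comm]
    exact two_mul_choose_succ_sub_choose_add_pos hle (by omega)

end CubicalFVector

theorem partial_unimodality_cubical_general (d : ℕ)
    (h : ℕ → ℕ) (hpos : ∀ i, i ≤ d - 1 → 0 < h i)
    (hsym : ∀ i, i ≤ d - 1 → h i = h (d - i - 1))
    (H : ℕ → ℕ → ℚ)
    (hH : ∀ i j, H i j = (2 : ℚ) ^ (-(j : ℤ)) * ((d - i - 1).choose (d - j - 1) : ℚ))
    (f : ℕ → ℚ) (hf : ∀ j, f j = ∑ i ∈ Finset.range d, (h i : ℚ) * H i j) :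
    (∀ j, j + 2 ≤ d / 3 → f j < f (j + 1)) ∧
    (1 ≤ d / 3 → f (d / 3 - 1) ≤ f (d / 3)) ∧
    (∀ j, 2 * d / 3 ≤ j → j + 2 ≤ d → f (j + 1) < f j) := by
  obtain rfl : f = cubicalFVector d h := funext fun j => by simp only [hf, hH, cubicalFVector]
  refine ⟨fun j _ => cubicalFVector_lt_succ hpos (by omega), fun hd3 => ?_,
    fun j hj hjd => cubicalFVector_succ_lt hpos hsym (by omega) hjd⟩
  simpa [Nat.sub_add_cancel hd3] using (cubicalFVector_lt_succ hpos (j := d / 3 - 1) (by omega)).le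

/-- Partial unimodality for cubical polytopes: if the short cubical h-vector has
positive integer entries and is symmetric, and f = h^(sc)·H with
H(i,j) = 2^(-j)·C(d-i-1,d-j-1), then f_0 < ... < f_{⌊d/3⌋-1} ≤ f_{⌊d/3⌋} and
f_{⌊2d/3⌋} > ... > f_{d-1}. -/
theorem partial_unimodality_cubical (d : ℕ) (hd : 0 < d)
    (h : ℕ → ℕ) (hpos : ∀ i, i ≤ d - 1 → 0 < h i)
    (hsym : ∀ i, i ≤ d - 1 → h i = h (d - i - 1))
    (H : ℕ → ℕ → ℚ)
    (hH : ∀ i j, H i j = (2 : ℚ) ^ (-(j : ℤ)) * ((d - i - 1).choose (d - j - 1) : ℚ))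
    (f : ℕ → ℚ) (hf : ∀ j, f j = ∑ i ∈ Finset.range d, (h i : ℚ) * H i j) :
    (∀ j, j + 2 ≤ d / 3 → f j < f (j + 1)) ∧
    (1 ≤ d / 3 → f (d / 3 - 1) ≤ f (d / 3)) ∧
    (∀ j, 2 * d / 3 ≤ j → j + 2 ≤ d → f (j + 1) < f j) :=
  partial_unimodality_cubical_general d h hpos hsym H hH f hf
end

section
/- Define the capping increment vector c = (c_0,...,c_{d-1}) by c_k = 2^(d-k)*C(d,k) - 2^(d-k-1)*C(d-1,k) for 0 ≤ k ≤ d-2 and c_{d-1} = 2(d-1). Then c is unimodal with peak at ⌊(d+1)/3⌋. -/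
/-!
For `k ≤ d - 2` one has `d * c_k = 2^(d-1-k) * (d + k) * C(d,k)`, so consecutive entries satisfy
`c_(k+1) / c_k = (d - k) (d + k + 1) / (2 (k + 1) (d + k))`. The numerator minus the
denominator equals `(d - 3k - 2)(d + k + 1) + 2(k + 1)`, which is nonnegative for `3k + 2 ≤ d`,
and also `(d - 3k - 1)(d + k) - 2k`, which is nonpositive for `d ≤ 3k + 1`.
The capped last entry `c_(d-1) = 2(d-1)` lies below `c_(d-2) = 2(d-1)^2`.
-/

def cappingIncrement (d k : ℕ) : ℤ :=
  2 ^ (d - k) * (d.choose k : ℤ) - 2 ^ (d - 1 - k) * ((d - 1).choose k : ℤ)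

lemma natCast_mul_cappingIncrement {d k : ℕ} (hk : k < d) :
    (d : ℤ) * cappingIncrement d k = 2 ^ (d - 1 - k) * ((d : ℤ) + k) * d.choose k := by
  obtain ⟨n, rfl⟩ : ∃ n, d = n + 1 := ⟨d - 1, by omega⟩
  have hchoose := Nat.choose_mul_succ_eq n k
  rw [show n + 1 - k = (n - k) + 1 by omega] at hchoose
  zify [show k ≤ n by omega] at hchoose
  rw [cappingIncrement, show n + 1 - k = (n - k) + 1 by omega, Nat.add_sub_cancel]
  push_cast
  linear_combination (-(2 : ℤ) ^ (n - k)) * hchoose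

lemma natCast_mul_succ_mul_sub_cappingIncrement {d k : ℕ} (hk : k + 2 ≤ d) :
    (d : ℤ) * (k + 1) * (cappingIncrement d (k + 1) - cappingIncrement d k) =
      2 ^ (d - 2 - k) * d.choose k *
        (((d : ℤ) + k + 1) * (d - k) - 2 * (k + 1) * (d + k)) := by
  have hk0 := natCast_mul_cappingIncrement (show k < d by omega)
  have hk1 := natCast_mul_cappingIncrement (show k + 1 < d by omega)
  have hchoose := Nat.choose_succ_right_eq d k
  zify [show k ≤ d by omega] at hchoose
  rw [show d - 1 - k = (d - 2 - k) + 1 by omega] at hk0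
  rw [show d - 1 - (k + 1) = d - 2 - k by omega] at hk1
  push_cast at hk1
  linear_combination ((k : ℤ) + 1) * hk1 - ((k : ℤ) + 1) * hk0
    + 2 ^ (d - 2 - k) * ((d : ℤ) + k + 1) * hchoose

lemma cappingIncrement_le_succ {d k : ℕ} (h : 3 * k + 2 ≤ d) :
    cappingIncrement d k ≤ cappingIncrement d (k + 1) := by
  have hd : (3 * k + 2 : ℤ) ≤ d := by exact_mod_cast h
  have hquad : (0 : ℤ) ≤ ((d : ℤ) + k + 1) * (d - k) - 2 * (k + 1) * (d + k) := by
    nlinarith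
  have hprod : (0 : ℤ) ≤ (d : ℤ) * (k + 1) * (cappingIncrement d (k + 1) - cappingIncrement d k) := by
    rw [natCast_mul_succ_mul_sub_cappingIncrement (by omega)]
    positivity
  have hpos : (0 : ℤ) < (d : ℤ) * (k + 1) := by
    have : (0 : ℤ) < d := by omega
    positivity
  exact sub_nonneg.1 (nonneg_of_mul_nonneg_right hprod hpos)

lemma cappingIncrement_succ_le {d k : ℕ} (h : d ≤ 3 * k + 1) (hk : k + 2 ≤ d) :
    cappingIncrement d (k + 1) ≤ cappingIncrement d k := by
  have hd : (d : ℤ) ≤ 3 * k + 1 := by exact_mod_cast h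
  have hquad : ((d : ℤ) + k + 1) * (d - k) - 2 * (k + 1) * (d + k) ≤ 0 := by
    nlinarith
  have hprod : (d : ℤ) * (k + 1) * (cappingIncrement d (k + 1) - cappingIncrement d k) ≤ 0 := by
    rw [natCast_mul_succ_mul_sub_cappingIncrement hk]
    exact mul_nonpos_of_nonneg_of_nonpos (by positivity) hquad
  have hpos : (0 : ℤ) < (d : ℤ) * (k + 1) := by
    have : (0 : ℤ) < d := by omega
    positivity
  exact sub_nonpos.1 (Int.nonpos_of_mul_nonpos_right hprod hpos)

lemma cappingIncrement_self_sub_two {d : ℕ} (hd : 2 ≤ d) :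
    cappingIncrement d (d - 2) = 2 * ((d : ℤ) - 1) ^ 2 := by
  obtain ⟨m, rfl⟩ : ∃ m, d = m + 2 := ⟨d - 2, by omega⟩
  have hchoose : (m + 2).choose 2 * 2 = (m + 2) * (m + 1) := by
    simpa using Nat.choose_succ_right_eq (m + 2) 1
  rw [cappingIncrement, Nat.add_sub_cancel, show m + 2 - m = 2 by omega,
    show m + 2 - 1 - m = 1 by omega, Nat.choose_symm_of_eq_add (show m + 2 = m + 2 by rfl),
    show m + 2 - 1 = m + 1 by omega, Nat.choose_succ_self_right]
  zify at hchoose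
  push_cast
  linear_combination 2 * hchoose

/-- The capping increment vector c, with c_k = 2^(d-k)·C(d,k) - 2^(d-1-k)·C(d-1,k)
for k ≤ d-2 and c_{d-1} = 2(d-1), is unimodal with peak at ⌊(d+1)/3⌋. -/
theorem capping_increment_unimodal (d : ℕ) (hd : 2 ≤ d) (c : ℕ → ℤ)
    (hc1 : ∀ k, k ≤ d - 2 → c k =
      (2 : ℤ) ^ (d - k) * (d.choose k : ℤ) - 2 ^ (d - 1 - k) * ((d - 1).choose k : ℤ))
    (hc2 : c (d - 1) = 2 * ((d : ℤ) - 1)) :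
    (∀ k, k + 1 ≤ (d + 1) / 3 → c k ≤ c (k + 1)) ∧
    (∀ k, (d + 1) / 3 ≤ k → k + 1 ≤ d - 1 → c (k + 1) ≤ c k) := by
  have hc : ∀ k, k ≤ d - 2 → c k = cappingIncrement d k := hc1
  refine ⟨fun k hk => ?_, fun k hk hkd => ?_⟩
  · obtain rfl | hkd : d = 2 ∨ k + 1 ≤ d - 2 := by omega
    · obtain rfl : k = 0 := by omega
      rw [hc 0 le_rfl, show c 1 = 2 by simpa using hc2]
      decide
    · rw [hc k (by omega), hc (k + 1) hkd]
      exact cappingIncrement_le_succ (by omega)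
  · obtain rfl | hkd : k = d - 2 ∨ k + 1 ≤ d - 2 := by omega
    · rw [show d - 2 + 1 = d - 1 by omega, hc2, hc _ le_rfl, cappingIncrement_self_sub_two hd]
      nlinarith
    · rw [hc k (by omega), hc (k + 1) hkd]
      exact cappingIncrement_succ_le (by omega) (by omega)
end

section
/- Let d ≥ 2 and suppose (g_0,...,g_{d-1}) is a unimodal vector of non-negative integers peaking at ⌊(d+1)/3⌋, and let c_k = 2^(d-k)*C(d,k) - 2^(d-k-1)*C(d-1,k) for k ≤ d-2, c_{d-1} = 2(d-1). Then for every n ≥ 0, the vector (g_k + n·c_k)_{k=0}^{d-1} is unimodal peaking at ⌊(d+1)/3⌋. In particular, the f-vector of every capped cubical d-polytope (an n-fold capped polytope over a d-cube) is unimodal with peak at ⌊(d+1)/3⌋. -/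
/-!
Let `f k = 2^(d-k) C(d,k)`. Consecutive entries satisfy `2(k+1) f(k+1) = (d-k) f(k)`, so the
cube's f-vector increases exactly while `3k+2 ≤ d`, i.e. up to `⌊(d+1)/3⌋`. For `k ≤ d-2` the
capping increment is `c k = f_d(k) - f_{d-1}(k) = (d+k) f_d(k) / 2d`, so its consecutive ratio
`(d-k)(d+k+1) / 2(k+1)(d+k)` crosses `1` at the same index; the last entry `c (d-1) = 2(d-1)` is
compared with `c (d-2) = 2(d-1)^2` directly. Unimodality with a fixed peak is preserved by sums
and nonnegative multiples.
-/

def cubeFaces (d k : ℕ) : ℕ := 2 ^ (d - k) * d.choose k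

theorem cubeFaces_succ_mul {d k : ℕ} (hk : k < d) :
    cubeFaces d (k + 1) * (2 * (k + 1)) = cubeFaces d k * (d - k) := by
  have hpow : 2 ^ (d - k) = 2 * 2 ^ (d - (k + 1)) := by
    rw [show d - k = d - (k + 1) + 1 by omega, pow_succ']
  rw [cubeFaces, cubeFaces, hpow]
  linear_combination (2 * 2 ^ (d - (k + 1))) * Nat.choose_succ_right_eq d k

theorem cubeFaces_succ_left_mul {d k : ℕ} (hk : k ≤ d) :
    cubeFaces d k * (2 * (d + 1)) = cubeFaces (d + 1) k * (d + 1 - k) := by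
  have hpow : 2 ^ (d + 1 - k) = 2 * 2 ^ (d - k) := by
    rw [show d + 1 - k = d - k + 1 by omega, pow_succ']
  rw [cubeFaces, cubeFaces, hpow]
  linear_combination (2 * 2 ^ (d - k)) * Nat.choose_mul_succ_eq d k

def UnimodalWithPeak {α : Type*} [Preorder α] (a : ℕ → α) (p m : ℕ) : Prop :=
  (∀ k, k + 1 ≤ p → a k ≤ a (k + 1)) ∧ (∀ k, p ≤ k → k + 1 ≤ m → a (k + 1) ≤ a k)

namespace UnimodalWithPeak

variable {α : Type*} {a b : ℕ → α} {p m : ℕ}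

theorem add [AddCommMonoid α] [PartialOrder α] [IsOrderedAddMonoid α]
    (ha : UnimodalWithPeak a p m) (hb : UnimodalWithPeak b p m) :
    UnimodalWithPeak (fun k => a k + b k) p m :=
  ⟨fun k hk => add_le_add (ha.1 k hk) (hb.1 k hk),
    fun k hk hkm => add_le_add (ha.2 k hk hkm) (hb.2 k hk hkm)⟩

theorem const_mul [Mul α] [Zero α] [Preorder α] [PosMulMono α]
    (ha : UnimodalWithPeak a p m) {n : α} (hn : 0 ≤ n) :
    UnimodalWithPeak (fun k => n * a k) p m :=
  ⟨fun k hk => mul_le_mul_of_nonneg_left (ha.1 k hk) hn,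
    fun k hk hkm => mul_le_mul_of_nonneg_left (ha.2 k hk hkm) hn⟩

theorem monotone_comp [Preorder α] {β : Type*} [Preorder β] {f : α → β} (hf : Monotone f)
    (ha : UnimodalWithPeak a p m) : UnimodalWithPeak (fun k => f (a k)) p m :=
  ⟨fun k hk => hf (ha.1 k hk), fun k hk hkm => hf (ha.2 k hk hkm)⟩

end UnimodalWithPeak

section RatioTest

variable {α : Type*} [Semiring α] [LinearOrder α] [IsStrictOrderedRing α] {x y p q : α}

theorem le_of_mul_eq_mul_of_le (h : y * q = x * p) (hx : 0 ≤ x) (hq : 0 < q) (hqp : q ≤ p) :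
    x ≤ y :=
  le_of_mul_le_mul_right (h ▸ mul_le_mul_of_nonneg_left hqp hx) hq

theorem le_of_mul_eq_mul_of_ge (h : y * q = x * p) (hx : 0 ≤ x) (hq : 0 < q) (hpq : p ≤ q) :
    y ≤ x :=
  le_of_mul_le_mul_right (h ▸ mul_le_mul_of_nonneg_left hpq hx) hq

end RatioTest

theorem cubeFaces_unimodal (d : ℕ) : UnimodalWithPeak (cubeFaces d) ((d + 1) / 3) (d - 1) :=
  ⟨fun k hk => le_of_mul_eq_mul_of_le (cubeFaces_succ_mul (by omega)) (Nat.zero_le _)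
      (by positivity) (by omega),
    fun k hk hkd => le_of_mul_eq_mul_of_ge (cubeFaces_succ_mul (by omega)) (Nat.zero_le _)
      (by positivity) (by omega)⟩

section CapIncrement

variable {d : ℕ} {c : ℕ → ℤ}
  (hc1 : ∀ k, k ≤ d - 2 → c k =
    (2 : ℤ) ^ (d - k) * (d.choose k : ℤ) - 2 ^ (d - 1 - k) * ((d - 1).choose k : ℤ))
include hc1

theorem two_mul_mul_capIncrement_eq {k : ℕ} (hk : k + 2 ≤ d) :
    2 * d * c k = (d + k) * cubeFaces d k := by
  have h := congrArg (Nat.cast : ℕ → ℤ) (cubeFaces_succ_left_mul (d := d - 1) (k := k) (by omega))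
  push_cast [Nat.sub_add_cancel (by omega : 1 ≤ d), Nat.cast_sub (by omega : k ≤ d)] at h
  rw [hc1 k (by omega)]
  push_cast [cubeFaces] at h ⊢
  linear_combination -h

theorem capIncrement_nonneg {k : ℕ} (hk : k + 2 ≤ d) : 0 ≤ c k := by
  refine nonneg_of_mul_nonneg_right (a := (2 * d : ℤ)) ?_ (by omega)
  rw [two_mul_mul_capIncrement_eq hc1 hk]
  positivity

theorem capIncrement_succ_mul {k : ℕ} (hk : k + 3 ≤ d) :
    c (k + 1) * (2 * (k + 1) * (d + k)) = c k * ((d - k) * (d + k + 1)) := by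
  have hcast := congrArg (Nat.cast : ℕ → ℤ) (cubeFaces_succ_mul (d := d) (k := k) (by omega))
  push_cast [Nat.cast_sub (by omega : k ≤ d)] at hcast
  have h0 := two_mul_mul_capIncrement_eq hc1 (k := k) (by omega)
  have h1 := two_mul_mul_capIncrement_eq hc1 (k := k + 1) hk
  push_cast at h1
  refine mul_left_cancel₀ (by omega : (2 * d : ℤ) ≠ 0) ?_
  linear_combination (2 * (k + 1) * (d + k) : ℤ) * h1 + ((d + k + 1) * (d + k) : ℤ) * hcast
    - ((d - k) * (d + k + 1) : ℤ) * h0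

theorem capIncrement_penultimate (hd : 2 ≤ d) : c (d - 2) = 2 * ((d : ℤ) - 1) ^ 2 := by
  obtain ⟨m, rfl⟩ : ∃ m, d = m + 2 := ⟨d - 2, by omega⟩
  have hcast := congrArg (Nat.cast : ℕ → ℤ) (cubeFaces_succ_mul (d := m + 2) (k := m) (by omega))
  have hlast : cubeFaces (m + 2) (m + 1) = 2 * (m + 2) := by
    simp [cubeFaces, Nat.choose_succ_self_right]
  rw [hlast, Nat.add_sub_cancel_left] at hcast
  push_cast at hcast
  have h := two_mul_mul_capIncrement_eq hc1 (k := m) (by omega)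
  push_cast at h
  rw [Nat.add_sub_cancel]
  push_cast
  refine mul_left_cancel₀ (by positivity : (2 * (m + 2) : ℤ) ≠ 0) ?_
  linear_combination h - (m + 1 : ℤ) * hcast

theorem capIncrement_le_succ (hd : 2 ≤ d) (hc2 : c (d - 1) = 2 * ((d : ℤ) - 1)) {k : ℕ}
    (hk : 3 * k + 2 ≤ d) : c k ≤ c (k + 1) := by
  rcases Nat.lt_or_ge (k + 2) d with hk3 | hk2
  · refine le_of_mul_eq_mul_of_le (capIncrement_succ_mul hc1 hk3)
      (capIncrement_nonneg hc1 (by omega)) (by positivity) ?_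
    have : (2 * (k + 1) : ℤ) ≤ d - k := by omega
    nlinarith
  · obtain rfl : d = 2 := by omega
    obtain rfl : k = 0 := by omega
    have h0 := capIncrement_penultimate hc1 le_rfl
    norm_num at h0 hc2 ⊢
    rw [h0, hc2]

theorem capIncrement_succ_le (hd : 2 ≤ d) (hc2 : c (d - 1) = 2 * ((d : ℤ) - 1)) {k : ℕ}
    (hk : d ≤ 3 * k + 1) (hkd : k + 2 ≤ d) : c (k + 1) ≤ c k := by
  rcases Nat.lt_or_ge (k + 2) d with hk3 | hk2
  · refine le_of_mul_eq_mul_of_ge (capIncrement_succ_mul hc1 hk3) (capIncrement_nonneg hc1 hkd)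
      (by positivity) ?_
    have : (d - k : ℤ) ≤ 2 * k + 1 := by omega
    nlinarith
  · obtain rfl : k = d - 2 := by omega
    rw [show d - 2 + 1 = d - 1 by omega, hc2, capIncrement_penultimate hc1 hd]
    have : (1 : ℤ) ≤ d - 1 := by omega
    nlinarith

theorem capIncrement_unimodal (hd : 2 ≤ d) (hc2 : c (d - 1) = 2 * ((d : ℤ) - 1)) :
    UnimodalWithPeak c ((d + 1) / 3) (d - 1) :=
  ⟨fun _ hk => capIncrement_le_succ hc1 hd hc2 (by omega),
    fun _ hk hkd => capIncrement_succ_le hc1 hd hc2 (by omega) (by omega)⟩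

end CapIncrement

/-- If g is a unimodal vector of non-negative integers peaking at ⌊(d+1)/3⌋ and c
is the capping increment vector, then g + n·c is unimodal peaking at ⌊(d+1)/3⌋
for every n ≥ 0. In particular the f-vector of every n-fold capped polytope over
the d-cube (whose f-vector is f_k = 2^(d-k)·C(d,k)) is unimodal with peak ⌊(d+1)/3⌋. -/
theorem capped_fvector_unimodal (d : ℕ) (hd : 2 ≤ d)
    (c : ℕ → ℤ)
    (hc1 : ∀ k, k ≤ d - 2 → c k =
      (2 : ℤ) ^ (d - k) * (d.choose k : ℤ) - 2 ^ (d - 1 - k) * ((d - 1).choose k : ℤ))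
    (hc2 : c (d - 1) = 2 * ((d : ℤ) - 1))
    (g : ℕ → ℕ)
    (hg1 : ∀ k, k + 1 ≤ (d + 1) / 3 → g k ≤ g (k + 1))
    (hg2 : ∀ k, (d + 1) / 3 ≤ k → k + 1 ≤ d - 1 → g (k + 1) ≤ g k) :
    (∀ n : ℕ,
      (∀ k, k + 1 ≤ (d + 1) / 3 →
        (g k : ℤ) + (n : ℤ) * c k ≤ (g (k + 1) : ℤ) + (n : ℤ) * c (k + 1)) ∧
      (∀ k, (d + 1) / 3 ≤ k → k + 1 ≤ d - 1 →
        (g (k + 1) : ℤ) + (n : ℤ) * c (k + 1) ≤ (g k : ℤ) + (n : ℤ) * c k)) ∧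
    (∀ n : ℕ,
      (∀ k, k + 1 ≤ (d + 1) / 3 →
        ((2 ^ (d - k) * d.choose k : ℕ) : ℤ) + (n : ℤ) * c k ≤
          ((2 ^ (d - (k + 1)) * d.choose (k + 1) : ℕ) : ℤ) + (n : ℤ) * c (k + 1)) ∧
      (∀ k, (d + 1) / 3 ≤ k → k + 1 ≤ d - 1 →
        ((2 ^ (d - (k + 1)) * d.choose (k + 1) : ℕ) : ℤ) + (n : ℤ) * c (k + 1) ≤
          ((2 ^ (d - k) * d.choose k : ℕ) : ℤ) + (n : ℤ) * c k)) := by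
  have hcap := capIncrement_unimodal hc1 hd hc2
  have add_capping : ∀ a : ℕ → ℕ, UnimodalWithPeak a ((d + 1) / 3) (d - 1) → ∀ n : ℕ,
      UnimodalWithPeak (fun k => (a k : ℤ) + n * c k) ((d + 1) / 3) (d - 1) :=
    fun a ha n => (ha.monotone_comp Nat.mono_cast).add (hcap.const_mul (by positivity))
  exact ⟨add_capping g ⟨hg1, hg2⟩, add_capping (cubeFaces d) (cubeFaces_unimodal d)⟩
end

section
/- For d = 10, there is no symmetric unimodal vector (h_0,...,h_9) of positive integers (h_i = h_{9-i}) such that the vector f = h·H, with H(i,j) = 2^(-j)*C(9-i, 9-j), satisfies any of the dip conditions f_3 > f_4 < f_5, f_3 > f_4 < f_6, f_3 > f_5 < f_6, or f_4 > f_5 < f_6. Consequently, the f-vector of every cubical 10-polytope is unimodal. -/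
/-!
Symmetry and unimodality force `h₀ ≤ h₁ ≤ h₂ ≤ h₃ ≤ h₄ = h₅`, and the other half of `h` is the mirror
image. Then `2ʲ fⱼ = ∑ᵢ C(9-i, 9-j) hᵢ` is a linear form in the five nonnegative numbers
`h₀, h₁ - h₀, …, h₄ - h₃`, with coefficients that make `f` increase up to `f₃` and decrease from `f₆`,
and that rule out each of the four dips. Without dips, a peak among `f₃, …, f₆` exists.
-/

open Finset

def IsUnimodalUpTo {α : Type*} [Preorder α] (n : ℕ) (u : ℕ → α) : Prop :=
  ∃ p, p ≤ n ∧ (∀ i, i + 1 ≤ p → u i ≤ u (i + 1)) ∧ (∀ i, p ≤ i → i + 1 ≤ n → u (i + 1) ≤ u i)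

theorem IsUnimodalUpTo.le_succ_of_symm {α : Type*} [Preorder α] {n : ℕ} {u : ℕ → α}
    (hu : IsUnimodalUpTo n u) (hsym : ∀ i, i ≤ n → u i = u (n - i)) {i : ℕ}
    (hi : 2 * i + 1 ≤ n) : u i ≤ u (i + 1) := by
  obtain ⟨p, -, hup, hdown⟩ := hu
  rcases le_or_gt (i + 1) p with hip | hpi
  · exact hup i hip
  · have := hdown (n - (i + 1)) (by omega) (by omega)
    rwa [show n - (i + 1) + 1 = n - i by omega, ← hsym i (by omega),
      ← hsym (i + 1) (by omega)] at this

theorem isUnimodalUpTo_nine_of_no_dips {α : Type*} [LinearOrder α] (u : ℕ → α)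
    (h01 : u 0 ≤ u 1) (h12 : u 1 ≤ u 2) (h23 : u 2 ≤ u 3)
    (h76 : u 7 ≤ u 6) (h87 : u 8 ≤ u 7) (h98 : u 9 ≤ u 8)
    (h435 : ¬(u 4 < u 3 ∧ u 4 < u 5)) (h436 : ¬(u 4 < u 3 ∧ u 4 < u 6))
    (h546 : ¬(u 5 < u 4 ∧ u 5 < u 6)) :
    IsUnimodalUpTo 9 u := by
  have peak_at : ∀ p ≤ 9, (∀ i < p, u i ≤ u (i + 1)) →
      (∀ i, p ≤ i → i < 9 → u (i + 1) ≤ u i) → IsUnimodalUpTo 9 u :=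
    fun p hp hup hdown =>
      ⟨p, hp, fun i hi => hup i (by omega), fun i hi hi9 => hdown i hi (by omega)⟩
  rcases le_or_gt (u 3) (u 4) with h34 | h43
  · rcases le_or_gt (u 4) (u 5) with h45 | h54
    · rcases le_or_gt (u 5) (u 6) with h56 | h65
      · exact peak_at 6 (by norm_num) (fun i hi => by interval_cases i <;> assumption)
          (fun i hi hi9 => by interval_cases i <;> assumption)
      · exact peak_at 5 (by norm_num) (fun i hi => by interval_cases i <;> assumption)
          (fun i hi hi9 => by interval_cases i <;> first | assumption | exact h65.le)
    · have h65 : u 6 ≤ u 5 := not_lt.mp fun h56 => h546 ⟨h54, h56⟩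
      exact peak_at 4 (by norm_num) (fun i hi => by interval_cases i <;> assumption)
        (fun i hi hi9 => by interval_cases i <;> first | assumption | exact h54.le)
  · have h54 : u 5 ≤ u 4 := not_lt.mp fun h45 => h435 ⟨h43, h45⟩
    have h65 : u 6 ≤ u 5 := by
      rcases h54.lt_or_eq with h54 | h54
      · exact not_lt.mp fun h56 => h546 ⟨h54, h56⟩
      · exact h54 ▸ not_lt.mp fun h46 => h436 ⟨h43, h46⟩
    exact peak_at 3 (by norm_num) (fun i hi => by interval_cases i <;> assumption)
      (fun i hi hi9 => by interval_cases i <;> first | assumption | exact h43.le)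

section CubicalFVector

variable {h : ℕ → ℕ} {f : ℕ → ℚ}
  (hf : ∀ j, f j = ∑ i ∈ Finset.range 10,
    (h i : ℚ) * ((2 : ℚ) ^ (-(j : ℤ)) * ((9 - i).choose (9 - j) : ℚ)))
include hf

theorem two_pow_mul_eq_sum_choose (j : ℕ) :
    (2 : ℚ) ^ j * f j = ∑ i ∈ range 10, (h i : ℚ) * ((9 - i).choose (9 - j) : ℚ) := by
  rw [hf, mul_sum]
  refine sum_congr rfl fun i _ => ?_
  rw [zpow_neg, zpow_natCast]
  field_simp

variable (hsym : ∀ i, i ≤ 9 → h i = h (9 - i)) (huni : IsUnimodalUpTo 9 h)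
include hsym huni

theorem cubical10_no_dips :
    ¬(f 4 < f 3 ∧ f 4 < f 5) ∧ ¬(f 4 < f 3 ∧ f 4 < f 6) ∧
    ¬(f 5 < f 3 ∧ f 5 < f 6) ∧ ¬(f 5 < f 4 ∧ f 5 < f 6) := by
  have F := two_pow_mul_eq_sum_choose hf
  have F3 := F 3; have F4 := F 4; have F5 := F 5; have F6 := F 6
  norm_num [sum_range_succ, Nat.choose] at F3 F4 F5 F6
  have s5 : (h 5 : ℚ) = h 4 := by exact_mod_cast hsym 5 (by norm_num)
  have s6 : (h 6 : ℚ) = h 3 := by exact_mod_cast hsym 6 (by norm_num)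
  have m : ∀ i, 2 * i + 1 ≤ 9 → (h i : ℚ) ≤ h (i + 1) := fun i hi => by
    exact_mod_cast huni.le_succ_of_symm hsym hi
  have := m 0 (by norm_num); have := m 1 (by norm_num)
  have := m 2 (by norm_num); have := m 3 (by norm_num)
  refine ⟨?_, ?_, ?_, ?_⟩ <;> rintro ⟨_, _⟩ <;> linarith

theorem cubical10_isUnimodalUpTo : IsUnimodalUpTo 9 f := by
  have F := two_pow_mul_eq_sum_choose hf
  have F0 := F 0; have F1 := F 1; have F2 := F 2; have F3 := F 3
  have F6 := F 6; have F7 := F 7; have F8 := F 8; have F9 := F 9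
  norm_num [sum_range_succ, Nat.choose] at F0 F1 F2 F3 F6 F7 F8 F9
  have s : ∀ i, i ≤ 9 → (h i : ℚ) = h (9 - i) := fun i hi => by exact_mod_cast hsym i hi
  have := s 5 (by norm_num); have := s 6 (by norm_num); have := s 7 (by norm_num)
  have := s 8 (by norm_num); have := s 9 (by norm_num)
  have m : ∀ i, 2 * i + 1 ≤ 9 → (h i : ℚ) ≤ h (i + 1) := fun i hi => by
    exact_mod_cast huni.le_succ_of_symm hsym hi
  have := m 0 (by norm_num); have := m 1 (by norm_num)
  have := m 2 (by norm_num); have := m 3 (by norm_num)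
  have h0 : (0 : ℚ) ≤ h 0 := Nat.cast_nonneg _
  obtain ⟨h435, h436, -, h546⟩ := cubical10_no_dips hf hsym huni
  exact isUnimodalUpTo_nine_of_no_dips f (by linarith) (by linarith) (by linarith)
    (by linarith) (by linarith) (by linarith) h435 h436 h546

end CubicalFVector

theorem cubical_10_polytope_unimodal_general
    (h : ℕ → ℕ)
    (hsym : ∀ i, i ≤ 9 → h i = h (9 - i))
    (huni : ∃ p, p ≤ 9 ∧ (∀ i, i + 1 ≤ p → h i ≤ h (i + 1)) ∧
      (∀ i, p ≤ i → i + 1 ≤ 9 → h (i + 1) ≤ h i))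
    (f : ℕ → ℚ)
    (hf : ∀ j, f j = ∑ i ∈ Finset.range 10,
      (h i : ℚ) * ((2 : ℚ) ^ (-(j : ℤ)) * ((9 - i).choose (9 - j) : ℚ))) :
    ¬(f 4 < f 3 ∧ f 4 < f 5) ∧ ¬(f 4 < f 3 ∧ f 4 < f 6) ∧
    ¬(f 5 < f 3 ∧ f 5 < f 6) ∧ ¬(f 5 < f 4 ∧ f 5 < f 6) ∧
    ∃ p, p ≤ 9 ∧ (∀ j, j + 1 ≤ p → f j ≤ f (j + 1)) ∧
      (∀ j, p ≤ j → j + 1 ≤ 9 → f (j + 1) ≤ f j) := by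
  obtain ⟨d435, d436, d536, d546⟩ := cubical10_no_dips hf hsym huni
  exact ⟨d435, d436, d536, d546, cubical10_isUnimodalUpTo hf hsym huni⟩

/-- For d = 10: no symmetric unimodal positive-integer vector h with f = h·H,
H(i,j) = 2^(-j)·C(9-i,9-j), produces any of the dips f_3 > f_4 < f_5,
f_3 > f_4 < f_6, f_3 > f_5 < f_6, f_4 > f_5 < f_6; consequently f is unimodal. -/
theorem cubical_10_polytope_unimodal
    (h : ℕ → ℕ) (hpos : ∀ i, i ≤ 9 → 0 < h i)
    (hsym : ∀ i, i ≤ 9 → h i = h (9 - i))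
    (huni : ∃ p, p ≤ 9 ∧ (∀ i, i + 1 ≤ p → h i ≤ h (i + 1)) ∧
      (∀ i, p ≤ i → i + 1 ≤ 9 → h (i + 1) ≤ h i))
    (f : ℕ → ℚ)
    (hf : ∀ j, f j = ∑ i ∈ Finset.range 10,
      (h i : ℚ) * ((2 : ℚ) ^ (-(j : ℤ)) * ((9 - i).choose (9 - j) : ℚ))) :
    ¬(f 4 < f 3 ∧ f 4 < f 5) ∧ ¬(f 4 < f 3 ∧ f 4 < f 6) ∧
    ¬(f 5 < f 3 ∧ f 5 < f 6) ∧ ¬(f 5 < f 4 ∧ f 5 < f 6) ∧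
    ∃ p, p ≤ 9 ∧ (∀ j, j + 1 ≤ p → f j ≤ f (j + 1)) ∧
      (∀ j, p ≤ j → j + 1 ≤ 9 → f (j + 1) ≤ f j) :=
  cubical_10_polytope_unimodal_general h hsym huni f hf
end
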